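/- Let (x_r)_{r≥1} be a sequence of reals and let f := Σ_{r≥1} (x_r/r!)·t^r ∈ ℝ[[t]] be the associated formal power series (with zero constant term, so 1−f is invertible in ℝ[[t]]). Then for all m, n ∈ ℕ: n!·m!·(the coefficient of t^n in (1−f)^{−(m+1)}) = Σ_{K=0}^{n} (m+K)!·B_{n,K}(x₁,…,x_{n−K+1}), where (1−f)^{−(m+1)} denotes the (m+1)-st power of the multiplicative inverse of 1−f in ℝ[[t]]. -/

import Mathlib

/-- The partial Bell polynomial `B_{n,k}(x₁,…,x_{n−k+1})`, defined by the explicit sum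
`Σ n!/(j₁!⋯j_{n−k+1}!)·∏ᵢ(xᵢ/i!)^{jᵢ}` over nonnegative integers `j₁,…,j_{n−k+1}` with
`j₁+⋯+j_{n−k+1} = k` and `1j₁+2j₂+⋯+(n−k+1)j_{n−k+1} = n`. -/
noncomputable def bellPoly (n k : ℕ) (x : ℕ → ℝ) : ℝ :=
  ∑ j ∈ (Finset.Nat.antidiagonalTuple (n - k + 1) k).filter
      (fun j : Fin (n - k + 1) → ℕ => ∑ i : Fin (n - k + 1), ((i : ℕ) + 1) * j i = n),
    (n.factorial : ℝ) / (∏ i : Fin (n - k + 1), ((j i).factorial : ℝ)) *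
      ∏ i : Fin (n - k + 1), (x ((i : ℕ) + 1) / (((i : ℕ) + 1).factorial : ℝ)) ^ (j i)

/-!
Because `f` has no constant term it can be substituted into the negative binomial series
`(1 - X)⁻¹ ^ (m + 1) = Σ_K C(m + K, m) X^K`, and since `f^K` has order at least `K` this gives
`[tⁿ] (1 - f)⁻¹ ^ (m + 1) = Σ_{K ≤ n} C(m + K, m) [tⁿ] f^K`. Writing `f = t·g`, only the first
`n - K + 1` coefficients of `g` reach `[tⁿ] f^K`; the multinomial theorem applied to that truncation
gives `n! [tⁿ] f^K = K! B_{n,K}(x)`, and `C(m + K, m) m! K! = (m + K)!`.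
-/

open Finset PowerSeries

theorem coeff_pow_eq_zero_of_lt {R : Type*} [CommRing R] {f : R⟦X⟧} (hf : constantCoeff f = 0)
    {n K : ℕ} (h : n < K) : coeff n (f ^ K) = 0 :=
  X_pow_dvd_iff.1 (pow_dvd_pow_of_dvd (X_dvd_iff.2 hf) K) n h

theorem inv_one_sub_pow_eq_subst_invOneSubPow {k : Type*} [Field k] {f : k⟦X⟧}
    (hf : constantCoeff f = 0) (d : ℕ) : (1 - f)⁻¹ ^ d = (invOneSubPow k d).val.subst f := by
  have hs := HasSubst.of_constantCoeff_zero' hf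
  have hS : (invOneSubPow k d).val.subst f * (1 - f) ^ d = 1 := by
    have := congrArg (substAlgHom (R := k) hs) (invOneSubPow k d).val_inv
    rwa [invOneSubPow_inv_eq_one_sub_pow, map_mul, map_pow, map_sub, map_one, coe_substAlgHom,
      subst_X hs] at this
  calc (1 - f)⁻¹ ^ d = (invOneSubPow k d).val.subst f * (1 - f) ^ d * (1 - f)⁻¹ ^ d := by
        rw [hS, one_mul]
    _ = (invOneSubPow k d).val.subst f * ((1 - f) * (1 - f)⁻¹) ^ d := by rw [mul_pow, mul_assoc]
    _ = (invOneSubPow k d).val.subst f := by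
        rw [PowerSeries.mul_inv_cancel _ (by simp [hf]), one_pow, mul_one]

theorem coeff_inv_one_sub_pow {k : Type*} [Field k] {f : k⟦X⟧} (hf : constantCoeff f = 0)
    (m n : ℕ) :
    coeff n ((1 - f)⁻¹ ^ (m + 1)) =
      ∑ K ∈ range (n + 1), ((m + K).choose m : k) * coeff n (f ^ K) := by
  rw [inv_one_sub_pow_eq_subst_invOneSubPow hf, coeff_subst' (HasSubst.of_constantCoeff_zero' hf),
    invOneSubPow_val_succ_eq_mk_add_choose]
  simp only [coeff_mk]
  refine finsum_eq_sum_of_support_subset _ fun K hK => ?_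
  rw [coe_range, Set.mem_Iio, Nat.lt_succ_iff]
  by_contra hnK
  exact hK (by simp only [coeff_pow_eq_zero_of_lt hf (not_le.1 hnK), smul_zero])

theorem X_pow_dvd_X_mul_pow_sub_X_mul_pow {R : Type*} [CommRing R] {g h : R⟦X⟧} {d : ℕ}
    (hgh : X ^ d ∣ g - h) (K : ℕ) : X ^ (K + d) ∣ (X * g) ^ K - (X * h) ^ K := by
  rw [mul_pow, mul_pow, ← mul_sub, pow_add]
  exact mul_dvd_mul_left _ (hgh.trans (sub_dvd_pow_sub_pow g h K))

theorem X_pow_dvd_mk_sub_sum_fin {R : Type*} [CommRing R] (a : ℕ → R) (d : ℕ) :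
    X ^ d ∣ PowerSeries.mk a - ∑ i : Fin d, C (a i) * X ^ (i : ℕ) := by
  refine X_pow_dvd_iff.2 fun r hr => ?_
  rw [map_sub, coeff_mk, map_sum, Fintype.sum_eq_single ⟨r, hr⟩ fun i hi => ?_]
  · simp
  · rw [coeff_C_mul_X_pow, if_neg (fun h => hi (Fin.ext h.symm))]

theorem coeff_X_mul_mk_pow {R : Type*} [CommRing R] (a : ℕ → R) {n K d : ℕ} (h : n < K + d) :
    coeff n ((X * PowerSeries.mk a) ^ K) =
      ∑ j ∈ (Nat.antidiagonalTuple d K).filter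
          (fun j : Fin d → ℕ => ∑ i : Fin d, ((i : ℕ) + 1) * j i = n),
        (Nat.multinomial univ j : R) * ∏ i : Fin d, a i ^ j i := by
  have htrunc : coeff n ((X * PowerSeries.mk a) ^ K) =
      coeff n ((X * ∑ i : Fin d, C (a i) * X ^ (i : ℕ)) ^ K) :=
    sub_eq_zero.1 (by
      rw [← map_sub]
      exact X_pow_dvd_iff.1 (X_pow_dvd_X_mul_pow_sub_X_mul_pow (X_pow_dvd_mk_sub_sum_fin a d) K) n h)
  rw [htrunc, mul_sum, sum_pow_eq_sum_piAntidiag, piAntidiag_univ_fin_eq_antidiagonalTuple, map_sum,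
    sum_filter]
  refine sum_congr rfl fun j _ => ?_
  have hprod : ∏ i : Fin d, (X * (C (a i) * X ^ (i : ℕ))) ^ j i =
      C (∏ i : Fin d, a i ^ j i) * X ^ (∑ i : Fin d, ((i : ℕ) + 1) * j i) := by
    rw [map_prod, ← prod_pow_eq_pow_sum, ← prod_mul_distrib]
    refine prod_congr rfl fun i _ => ?_
    rw [map_pow, pow_mul, ← mul_pow]
    congr 1
    ring
  rw [hprod, ← map_natCast (C (R := R)), ← mul_assoc, ← map_mul, coeff_C_mul_X_pow]
  simp only [eq_comm]

theorem factorial_mul_bellPoly (n K : ℕ) (x : ℕ → ℝ) :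
    (K.factorial : ℝ) * bellPoly n K x = n.factorial *
      ∑ j ∈ (Nat.antidiagonalTuple (n - K + 1) K).filter
          (fun j : Fin (n - K + 1) → ℕ => ∑ i : Fin (n - K + 1), ((i : ℕ) + 1) * j i = n),
        (Nat.multinomial univ j : ℝ) *
          ∏ i : Fin (n - K + 1), (x ((i : ℕ) + 1) / ((i : ℕ) + 1).factorial) ^ j i := by
  rw [bellPoly, mul_sum, mul_sum]
  refine sum_congr rfl fun j hj => ?_
  have hspec := Nat.multinomial_spec univ j
  rw [Nat.mem_antidiagonalTuple.1 (mem_filter.1 hj).1] at hspec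
  have hprod : (∏ i, ((j i).factorial : ℝ)) ≠ 0 := prod_ne_zero_iff.2 fun i _ => by positivity
  rw [← hspec]
  push_cast
  field_simp

/-- Generating-function identity for partial Bell polynomials: with
`f = Σ_{r≥1}(x_r/r!)t^r ∈ ℝ[[t]]`, for all `m, n ∈ ℕ`:
`n!·m!·[t^n](1−f)^{−(m+1)} = Σ_{K=0}^{n}(m+K)!·B_{n,K}(x₁,…,x_{n−K+1})`. -/
theorem stmt_15 (x : ℕ → ℝ) (m n : ℕ) :
    (n.factorial : ℝ) * (m.factorial : ℝ) *
      PowerSeries.coeff (R := ℝ) n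
        ((1 - PowerSeries.mk (fun r => if r = 0 then 0 else x r / (r.factorial : ℝ)))⁻¹ ^ (m + 1))
    = ∑ K ∈ Finset.range (n + 1), (((m + K).factorial : ℕ) : ℝ) * bellPoly n K x := by
  have hshift : PowerSeries.mk (fun r => if r = 0 then 0 else x r / (r.factorial : ℝ)) =
      X * PowerSeries.mk (fun i => x (i + 1) / ((i + 1).factorial : ℝ)) := by
    ext (_ | r) <;> simp [coeff_succ_X_mul]
  rw [coeff_inv_one_sub_pow (by simp) m n, mul_sum]
  refine sum_congr rfl fun K hK => ?_
  have hKn : K < n + 1 := mem_range.1 hK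
  rw [hshift, coeff_X_mul_mk_pow _ (d := n - K + 1) (by omega), ← add_comm K m,
    ← Nat.add_choose_mul_factorial_mul_factorial K m]
  push_cast
  linear_combination ((K + m).choose m * m.factorial : ℝ) * (factorial_mul_bellPoly n K x).symm
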